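/- Let B ≥ 2 be an integer and n ≥ 1. Let v = (v_0,…,v_n) ∈ Δ_n be such that (B−1)·v_k is an integer for every k, and let x = (x_0,…,x_n) ∈ Δ_n be a point that is not a vertex of Δ_n. Then ∑_{k=0}^n H_B((x_k + (B−1)v_k)/B) = 1 + (1/B)·∑_{k=0}^n H_B(x_k). -/

import Mathlib

open scoped BigOperators

/-!
`H_B` is `1`-periodic and satisfies `H_B(y) = {y} + H_B(B y) / B`, so with
`y_k = (x_k + (B - 1) v_k) / B` and `(B - 1) v_k ∈ ℤ` we get `H_B(y_k) = {y_k} + H_B(x_k) / B`.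
Since `x` is not a vertex, every `x_k < 1`, hence `0 ≤ y_k < 1` and `{y_k} = y_k`;
finally `∑ y_k = (1 + (B - 1)) / B = 1`.
-/

/-- `H_B(x) = ∑_{k=0}^∞ {B^k x}/B^k` where `{y}` is the fractional part. -/
noncomputable def HB (B : ℕ) (x : ℝ) : ℝ :=
  ∑' k : ℕ, Int.fract ((B : ℝ) ^ k * x) / (B : ℝ) ^ k

section StdSimplex

variable {𝕜 ι : Type*} [Ring 𝕜] [PartialOrder 𝕜] [IsOrderedRing 𝕜] [Fintype ι] [DecidableEq ι]

theorem eq_ite_of_mem_stdSimplex_of_apply_eq_one {x : ι → 𝕜} (hx : x ∈ stdSimplex 𝕜 ι) {k : ι}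
    (hk : x k = 1) : x = fun j => if j = k then 1 else 0 := by
  have hrest : ∑ j ∈ Finset.univ.erase k, x j = 0 := by
    have := Finset.add_sum_erase Finset.univ x (Finset.mem_univ k)
    rw [hx.2, hk] at this
    exact add_eq_left.mp this
  funext j
  split_ifs with hj
  · rw [hj, hk]
  · exact (Finset.sum_eq_zero_iff_of_nonneg fun i _ => hx.1 i).mp hrest j
      (Finset.mem_erase.mpr ⟨hj, Finset.mem_univ j⟩)

theorem apply_lt_one_of_mem_stdSimplex {x : ι → 𝕜} (hx : x ∈ stdSimplex 𝕜 ι)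
    (hxv : ∀ k, x ≠ fun j => if j = k then 1 else 0) (k : ι) : x k < 1 :=
  (mem_Icc_of_mem_stdSimplex hx k).2.lt_of_ne
    fun hk => hxv k (eq_ite_of_mem_stdSimplex_of_apply_eq_one hx hk)

end StdSimplex

section HB

variable {B : ℕ}

theorem summable_fract_pow_mul_div_pow (hB : 1 < B) (y : ℝ) :
    Summable fun k : ℕ => Int.fract ((B : ℝ) ^ k * y) / (B : ℝ) ^ k := by
  have hB' : (1 : ℝ) < B := by exact_mod_cast hB
  refine Summable.of_nonneg_of_le (fun k => div_nonneg (Int.fract_nonneg _) (by positivity))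
    (fun k => ?_) (summable_geometric_of_lt_one (by positivity) (inv_lt_one_of_one_lt₀ hB'))
  rw [inv_pow, ← one_div]
  exact div_le_div_of_nonneg_right (Int.fract_lt_one _).le (by positivity)

theorem HB_add_intCast (x : ℝ) (m : ℤ) : HB B (x + m) = HB B x := by
  unfold HB
  congr 1
  funext k
  have : (B : ℝ) ^ k * (x + m) = (B : ℝ) ^ k * x + ((B ^ k * m : ℤ) : ℝ) := by
    push_cast
    ring
  rw [this, Int.fract_add_intCast]

theorem HB_eq_fract_add_HB_mul_div (hB : 1 < B) (y : ℝ) :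
    HB B y = Int.fract y + HB B (B * y) / B := by
  unfold HB
  rw [(summable_fract_pow_mul_div_pow hB y).tsum_eq_zero_add, ← tsum_div_const]
  simp only [pow_zero, one_mul, div_one, pow_succ, mul_assoc, div_div]

theorem HB_add_intCast_div (hB : 1 < B) (x : ℝ) (m : ℤ) :
    HB B ((x + m) / B) = Int.fract ((x + m) / B) + HB B x / B := by
  have hB0 : (B : ℝ) ≠ 0 := by positivity
  rw [HB_eq_fract_add_HB_mul_div hB, mul_div_cancel₀ _ hB0, HB_add_intCast]

end HB

theorem stmt19_general (B n : ℕ) (hB : 2 ≤ B)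
    (v : Fin (n + 1) → ℝ) (hv : v ∈ stdSimplex ℝ (Fin (n + 1)))
    (hvint : ∀ k, ∃ z : ℤ, ((B : ℝ) - 1) * v k = (z : ℝ))
    (x : Fin (n + 1) → ℝ) (hx : x ∈ stdSimplex ℝ (Fin (n + 1)))
    (hxnv : ∀ k : Fin (n + 1), x ≠ fun j => if j = k then (1 : ℝ) else 0) :
    (∑ k : Fin (n + 1), HB B ((x k + ((B : ℝ) - 1) * v k) / (B : ℝ))) =
      1 + (1 / (B : ℝ)) * ∑ k : Fin (n + 1), HB B (x k) := by
  have hB' : (1 : ℝ) < B := by exact_mod_cast hB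
  have hterm : ∀ k, HB B ((x k + ((B : ℝ) - 1) * v k) / B)
      = (x k + ((B : ℝ) - 1) * v k) / B + HB B (x k) / B := by
    intro k
    obtain ⟨z, hz⟩ := hvint k
    have hxk := apply_lt_one_of_mem_stdSimplex hx hxnv k
    have hvk := mem_Icc_of_mem_stdSimplex hv k
    have hmem : (x k + ((B : ℝ) - 1) * v k) / B ∈ Set.Ico 0 1 := by
      rw [Set.mem_Ico, div_lt_one (by linarith)]
      constructor
      · have := hx.1 k
        have := hvk.1
        positivity
      · nlinarith [hvk.2]
    rw [hz, HB_add_intCast_div hB, ← hz, Int.fract_eq_self.mpr hmem]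
  simp_rw [hterm]
  rw [Finset.sum_add_distrib, ← Finset.sum_div, ← Finset.sum_div, Finset.sum_add_distrib,
    ← Finset.mul_sum, hx.2, hv.2]
  field_simp
  ring

theorem stmt19 (B n : ℕ) (hB : 2 ≤ B) (hn : 1 ≤ n)
    (v : Fin (n + 1) → ℝ) (hv : v ∈ stdSimplex ℝ (Fin (n + 1)))
    (hvint : ∀ k, ∃ z : ℤ, ((B : ℝ) - 1) * v k = (z : ℝ))
    (x : Fin (n + 1) → ℝ) (hx : x ∈ stdSimplex ℝ (Fin (n + 1)))
    (hxnv : ∀ k : Fin (n + 1), x ≠ fun j => if j = k then (1 : ℝ) else 0) :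
    (∑ k : Fin (n + 1), HB B ((x k + ((B : ℝ) - 1) * v k) / (B : ℝ))) =
      1 + (1 / (B : ℝ)) * ∑ k : Fin (n + 1), HB B (x k) :=
  stmt19_general B n hB v hv hvint x hx hxnv
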